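/- For 0 < q < p ≤ 1 and x ∈ [0,1], the (p,q)-Bernstein operator satisfies B_{n,p,q}(e₂, x) = x² + p^{n-1} x(1-x)/[n]_{p,q}, where e₂(t) = t². -/

import Mathlib

noncomputable section

/-- The (p,q)-number [n]_{p,q} = (p^n - q^n)/(p - q). -/
def pqNum (p q : ℝ) (n : ℕ) : ℝ := (p ^ n - q ^ n) / (p - q)

/-- The (p,q)-factorial [n]_{p,q}!. -/
def pqFactorial (p q : ℝ) (n : ℕ) : ℝ := ∏ k ∈ Finset.range n, pqNum p q (k + 1)

/-- The (p,q)-binomial coefficient. -/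
def pqBinom (p q : ℝ) (n k : ℕ) : ℝ :=
  pqFactorial p q n / (pqFactorial p q (n - k) * pqFactorial p q k)

/-- The (p,q)-power basis (a ⊖ b)^n_{p,q} = ∏_{j=0}^{n-1} (p^j a - q^j b). -/
def pqPow (p q a b : ℝ) (n : ℕ) : ℝ := ∏ j ∈ Finset.range n, (p ^ j * a - q ^ j * b)

/-- The (p,q)-derivative. -/
def pqDeriv (p q : ℝ) (f : ℝ → ℝ) (x : ℝ) : ℝ := (f (p * x) - f (q * x)) / ((p - q) * x)

/-- The (p,q)-integral of f over [0,1] (case 0 < q < p). -/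
def pqInt (p q : ℝ) (f : ℝ → ℝ) : ℝ :=
  (p - q) * ∑' k : ℕ, (q ^ k / p ^ (k + 1)) * f (q ^ k / p ^ (k + 1))

/-- The (p,q)-Beta function B_{p,q}(m,n) = ∫₀¹ x^{m-1} (1 ⊖ qx)^{n-1} d_{p,q}x. -/
def pqBeta (p q : ℝ) (m n : ℕ) : ℝ :=
  pqInt p q (fun x => x ^ (m - 1) * pqPow p q 1 (q * x) (n - 1))

/-- The (p,q)-Gamma function: Γ_{p,q}(n+1) = [n]_{p,q}!. -/
def pqGamma (p q : ℝ) (n : ℕ) : ℝ := pqFactorial p q (n - 1)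

/-- The (p,q)-Bernstein basis b_{n,k}^{p,q}(1,x). -/
def bBasis (p q : ℝ) (n k : ℕ) (x : ℝ) : ℝ :=
  pqBinom p q n k * p ^ (k * (k - 1) / 2) / p ^ (n * (n - 1) / 2) * x ^ k *
    pqPow p q 1 x (n - k)

/-- The kernel b_{n,k}^{p,q}(t) = [n choose k] t^k (1 ⊖ qt)^{n-k}. -/
def bKernel (p q : ℝ) (n k : ℕ) (t : ℝ) : ℝ :=
  pqBinom p q n k * t ^ k * pqPow p q 1 (q * t) (n - k)

/-- The (p,q)-Bernstein operator B_{n,p,q}(f,x). -/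
def pqBernstein (p q : ℝ) (n : ℕ) (f : ℝ → ℝ) (x : ℝ) : ℝ :=
  ∑ k ∈ Finset.range (n + 1),
    bBasis p q n k x * f (p ^ (n - k) * pqNum p q k / pqNum p q n)

/-- The (p,q)-Bernstein-Durrmeyer operator D_n^{p,q}(f,x). -/
def pqDurrmeyer (p q : ℝ) (n : ℕ) (f : ℝ → ℝ) (x : ℝ) : ℝ :=
  pqNum p q (n + 1) *
    ∑ k ∈ Finset.Icc 1 n, (p ^ ((n - k + 1) * (n + k) / 2))⁻¹ * bBasis p q n k x *
      pqInt p q (fun t => bKernel p q n (k - 1) t * f t)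
  + bBasis p q n 0 x * f 0

/-!
Write `w_{n,k} = p ^ (n(n-1)/2) b_{n,k}(x)` (`pqWeight`). The (p,q)-Pascal rule splits
`w_{n+1,k+1} = a_{k+1} + b_k` with `a_k + b_k = p ^ n w_{n,k}`, so `∑ₖ w_{n,k}` telescopes to
`p ^ (n(n-1)/2)`. The absorption identity `[k+1] w_{n+1,k+1} = [n+1] x p ^ k w_{n,k}` shifts the
first and second moments down to degree `n`, and `[k+1] = p ^ k + q [k]` reduces the second
moment to the first: `∑ₖ (p ^ (n-k) [k])² w_{n,k} = [n] x p ^ (n(n-1)/2) (p ^ (n-1) + q [n-1] x)`.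
-/

theorem pqNum_zero (p q : ℝ) : pqNum p q 0 = 0 := by simp [pqNum]

theorem pqNum_one {p q : ℝ} (h : p ≠ q) : pqNum p q 1 = 1 := by
  simp [pqNum, sub_ne_zero.mpr h]

theorem pqNum_add {p q : ℝ} (h : p ≠ q) (a b : ℕ) :
    pqNum p q (a + b) = p ^ a * pqNum p q b + q ^ b * pqNum p q a := by
  unfold pqNum
  field_simp [sub_ne_zero.mpr h]
  ring

theorem pqNum_succ {p q : ℝ} (h : p ≠ q) (k : ℕ) :
    pqNum p q (k + 1) = p ^ k + q * pqNum p q k := by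
  rw [pqNum_add h, pqNum_one h]
  ring

theorem pqNum_pos {p q : ℝ} (hq : 0 ≤ q) (hqp : q < p) {n : ℕ} (hn : n ≠ 0) :
    0 < pqNum p q n :=
  div_pos (sub_pos.mpr (pow_lt_pow_left₀ hqp hq hn)) (sub_pos.mpr hqp)

theorem pqFactorial_zero (p q : ℝ) : pqFactorial p q 0 = 1 := Finset.prod_range_zero _

theorem pqFactorial_succ (p q : ℝ) (n : ℕ) :
    pqFactorial p q (n + 1) = pqFactorial p q n * pqNum p q (n + 1) :=
  Finset.prod_range_succ _ _

theorem pqFactorial_pos {p q : ℝ} (hq : 0 ≤ q) (hqp : q < p) (n : ℕ) :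
    0 < pqFactorial p q n :=
  Finset.prod_pos fun k _ => pqNum_pos hq hqp k.succ_ne_zero

section pqBinom

variable {p q : ℝ}

theorem pqBinom_zero_right (hq : 0 ≤ q) (hqp : q < p) (n : ℕ) : pqBinom p q n 0 = 1 := by
  rw [pqBinom, Nat.sub_zero, pqFactorial_zero, mul_one, div_self (pqFactorial_pos hq hqp n).ne']

theorem pqBinom_self (hq : 0 ≤ q) (hqp : q < p) (n : ℕ) : pqBinom p q n n = 1 := by
  rw [pqBinom, Nat.sub_self, pqFactorial_zero, one_mul, div_self (pqFactorial_pos hq hqp n).ne']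

theorem pqBinom_succ_succ_mul_pqNum (hq : 0 ≤ q) (hqp : q < p) (n k : ℕ) :
    pqBinom p q (n + 1) (k + 1) * pqNum p q (k + 1) =
      pqBinom p q n k * pqNum p q (n + 1) := by
  unfold pqBinom
  rw [Nat.succ_sub_succ, pqFactorial_succ p q n, pqFactorial_succ p q k]
  have := (pqFactorial_pos hq hqp (n - k)).ne'
  have := (pqFactorial_pos hq hqp k).ne'
  have := (pqNum_pos hq hqp k.succ_ne_zero).ne'
  field_simp

theorem pqBinom_succ_succ (hq : 0 ≤ q) (hqp : q < p) {n k : ℕ} (hk : k + 1 ≤ n) :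
    pqBinom p q (n + 1) (k + 1) =
      p ^ (k + 1) * pqBinom p q n (k + 1) + q ^ (n - k) * pqBinom p q n k := by
  obtain ⟨m, rfl⟩ : ∃ m, n = k + 1 + m := ⟨n - (k + 1), by omega⟩
  have hsplit : pqNum p q (k + 1 + m + 1) =
      p ^ (k + 1) * pqNum p q (m + 1) + q ^ (m + 1) * pqNum p q (k + 1) := by
    rw [add_assoc, pqNum_add hqp.ne']
  unfold pqBinom
  rw [show k + 1 + m + 1 - (k + 1) = m + 1 by omega, show k + 1 + m - (k + 1) = m by omega,
    show k + 1 + m - k = m + 1 by omega, pqFactorial_succ p q (k + 1 + m), hsplit,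
    pqFactorial_succ p q m, pqFactorial_succ p q k]
  have := (pqFactorial_pos hq hqp m).ne'
  have := (pqFactorial_pos hq hqp k).ne'
  have := (pqNum_pos hq hqp m.succ_ne_zero).ne'
  have := (pqNum_pos hq hqp k.succ_ne_zero).ne'
  field_simp

end pqBinom

theorem pqPow_succ (p q a b : ℝ) (m : ℕ) :
    pqPow p q a b (m + 1) = pqPow p q a b m * (p ^ m * a - q ^ m * b) :=
  Finset.prod_range_succ _ _

def pqWeight (p q : ℝ) (n k : ℕ) (x : ℝ) : ℝ :=
  pqBinom p q n k * p ^ (k * (k - 1) / 2) * x ^ k * pqPow p q 1 x (n - k)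

theorem pqBernstein_eq_sum_pqWeight (p q : ℝ) (n : ℕ) (f : ℝ → ℝ) (x : ℝ) :
    pqBernstein p q n f x =
      (∑ k ∈ Finset.range (n + 1),
        pqWeight p q n k x * f (p ^ (n - k) * pqNum p q k / pqNum p q n)) /
        p ^ (n * (n - 1) / 2) := by
  rw [pqBernstein, Finset.sum_div]
  refine Finset.sum_congr rfl fun k _ => ?_
  rw [bBasis, pqWeight]
  ring

section pqWeight

variable {p q : ℝ}

theorem pqWeight_zero_right (hq : 0 ≤ q) (hqp : q < p) (n : ℕ) (x : ℝ) :
    pqWeight p q n 0 x = pqPow p q 1 x n := by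
  simp [pqWeight, pqBinom_zero_right hq hqp]

theorem pqWeight_self (hq : 0 ≤ q) (hqp : q < p) (n : ℕ) (x : ℝ) :
    pqWeight p q n n x = p ^ (n * (n - 1) / 2) * x ^ n := by
  simp [pqWeight, pqBinom_self hq hqp, pqPow]

theorem pqWeight_succ_succ (hq : 0 ≤ q) (hqp : q < p) {n k : ℕ} (hk : k + 1 ≤ n) (x : ℝ) :
    pqWeight p q (n + 1) (k + 1) x =
      (p ^ n - p ^ (k + 1) * q ^ (n - (k + 1)) * x) * pqWeight p q n (k + 1) x +
        p ^ k * q ^ (n - k) * x * pqWeight p q n k x := by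
  have hpow : p ^ (k + 1) * p ^ (n - (k + 1)) = p ^ n := by rw [← pow_add]; congr 1; omega
  unfold pqWeight
  rw [pqBinom_succ_succ hq hqp hk, Nat.triangle_succ, show n + 1 - (k + 1) = n - (k + 1) + 1 by
    omega, pqPow_succ, show n - k = n - (k + 1) + 1 by omega, pqPow_succ, ← hpow]
  ring

theorem sum_pqWeight (hq : 0 ≤ q) (hqp : q < p) (n : ℕ) (x : ℝ) :
    ∑ k ∈ Finset.range (n + 1), pqWeight p q n k x = p ^ (n * (n - 1) / 2) := by
  induction n with
  | zero => simp [pqWeight_zero_right hq hqp, pqPow]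
  | succ n ih =>
    set b : ℕ → ℝ := fun k => p ^ k * q ^ (n - k) * x * pqWeight p q n k x
    set a : ℕ → ℝ := fun k => p ^ n * pqWeight p q n k x - b k
    have h_first : pqWeight p q (n + 1) 0 x = a 0 := by
      simp only [a, b, pqWeight_zero_right hq hqp, pqPow_succ, Nat.sub_zero, pow_zero, one_mul]
      ring
    have h_middle : ∀ k ∈ Finset.range n, pqWeight p q (n + 1) (k + 1) x = a (k + 1) + b k := by
      intro k hk
      rw [pqWeight_succ_succ hq hqp (Finset.mem_range.mp hk)]
      simp only [a, b]
      ring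
    have h_last : pqWeight p q (n + 1) (n + 1) x = b n := by
      simp only [b, pqWeight_self hq hqp, Nat.triangle_succ, Nat.sub_self]
      ring
    calc ∑ k ∈ Finset.range (n + 1 + 1), pqWeight p q (n + 1) k x
        = a 0 + ∑ k ∈ Finset.range n, (a (k + 1) + b k) + b n := by
          rw [Finset.sum_range_succ', Finset.sum_range_succ, Finset.sum_congr rfl h_middle,
            h_first, h_last]
          ring
      _ = ∑ k ∈ Finset.range (n + 1), (a k + b k) := by
          rw [Finset.sum_add_distrib, Finset.sum_add_distrib, Finset.sum_range_succ' a,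
            Finset.sum_range_succ b]
          ring
      _ = p ^ n * p ^ (n * (n - 1) / 2) := by
          simp only [a, sub_add_cancel, ← Finset.mul_sum, ih]
      _ = p ^ ((n + 1) * (n + 1 - 1) / 2) := by
          rw [← pow_add, Nat.triangle_succ, add_comm]

theorem pqNum_mul_pqWeight_succ_succ (hq : 0 ≤ q) (hqp : q < p) (n k : ℕ) (x : ℝ) :
    pqNum p q (k + 1) * pqWeight p q (n + 1) (k + 1) x =
      pqNum p q (n + 1) * x * p ^ k * pqWeight p q n k x := by
  have h := pqBinom_succ_succ_mul_pqNum (p := p) hq hqp n k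
  unfold pqWeight
  rw [Nat.triangle_succ, Nat.succ_sub_succ, pow_add]
  linear_combination (p ^ (k * (k - 1) / 2) * p ^ k * x ^ (k + 1) * pqPow p q 1 x (n - k)) * h

theorem sum_pqNum_mul_pqWeight (hq : 0 ≤ q) (hqp : q < p) (n : ℕ) (x : ℝ) :
    ∑ k ∈ Finset.range (n + 1), p ^ (n - k) * pqNum p q k * pqWeight p q n k x =
      pqNum p q n * x * p ^ (n * (n - 1) / 2) := by
  cases n with
  | zero => simp [pqNum_zero]
  | succ n =>
    have h_shift : ∀ k ∈ Finset.range (n + 1),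
        p ^ (n + 1 - (k + 1)) * pqNum p q (k + 1) * pqWeight p q (n + 1) (k + 1) x =
          pqNum p q (n + 1) * x * p ^ n * pqWeight p q n k x := by
      intro k hk
      have hk : k ≤ n := Nat.lt_succ_iff.mp (Finset.mem_range.mp hk)
      rw [mul_assoc, pqNum_mul_pqWeight_succ_succ hq hqp n k, Nat.succ_sub_succ,
        ← pow_sub_mul_pow p hk]
      ring
    rw [Finset.sum_range_succ', Finset.sum_congr rfl h_shift, ← Finset.mul_sum,
      sum_pqWeight hq hqp, pqNum_zero, Nat.triangle_succ, pow_add]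
    ring

theorem sum_sq_pqNum_mul_pqWeight (hq : 0 ≤ q) (hqp : q < p) (n : ℕ) (x : ℝ) :
    ∑ k ∈ Finset.range (n + 2), (p ^ (n + 1 - k) * pqNum p q k) ^ 2 * pqWeight p q (n + 1) k x =
      pqNum p q (n + 1) * x * p ^ ((n + 1) * n / 2) * (p ^ n + q * pqNum p q n * x) := by
  have h_shift : ∀ k ∈ Finset.range (n + 1),
      (p ^ (n + 1 - (k + 1)) * pqNum p q (k + 1)) ^ 2 * pqWeight p q (n + 1) (k + 1) x =
        pqNum p q (n + 1) * x * p ^ n *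
          (p ^ n * pqWeight p q n k x + q * (p ^ (n - k) * pqNum p q k * pqWeight p q n k x)) := by
    intro k hk
    have hk : k ≤ n := Nat.lt_succ_iff.mp (Finset.mem_range.mp hk)
    have hpow : p ^ (n - k) * p ^ k = p ^ n := pow_sub_mul_pow p hk
    rw [Nat.succ_sub_succ]
    linear_combination (p ^ (n - k)) ^ 2 * pqNum p q (k + 1) *
        pqNum_mul_pqWeight_succ_succ hq hqp n k x +
      pqNum p q (n + 1) * x * pqWeight p q n k x * (pqNum p q (k + 1) * p ^ (n - k) + p ^ n) *
        hpow +
      pqNum p q (n + 1) * x * p ^ n * pqWeight p q n k x * p ^ (n - k) * pqNum_succ hqp.ne' k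
  rw [Finset.sum_range_succ', Finset.sum_congr rfl h_shift, ← Finset.mul_sum,
    Finset.sum_add_distrib, ← Finset.mul_sum, ← Finset.mul_sum, sum_pqWeight hq hqp,
    sum_pqNum_mul_pqWeight hq hqp, pqNum_zero,
    show (n + 1) * n / 2 = n * (n - 1) / 2 + n from Nat.triangle_succ n, pow_add]
  ring

end pqWeight

theorem pqBernstein_e2_general (p q : ℝ) (hq : 0 < q) (hqp : q < p)
    (n : ℕ) (hn : 1 ≤ n) (x : ℝ) :
    pqBernstein p q n (fun t => t ^ 2) x =
      x ^ 2 + p ^ (n - 1) * x * (1 - x) / pqNum p q n := by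
  obtain ⟨m, rfl⟩ : ∃ m, n = m + 1 := ⟨n - 1, by omega⟩
  have hp : p ≠ 0 := (hq.trans hqp).ne'
  have hN : pqNum p q (m + 1) ≠ 0 := (pqNum_pos hq.le hqp m.succ_ne_zero).ne'
  calc pqBernstein p q (m + 1) (fun t => t ^ 2) x
      = (∑ k ∈ Finset.range (m + 2),
          (p ^ (m + 1 - k) * pqNum p q k) ^ 2 * pqWeight p q (m + 1) k x) /
          (pqNum p q (m + 1) ^ 2 * p ^ ((m + 1) * m / 2)) := by
        rw [pqBernstein_eq_sum_pqWeight, Nat.add_sub_cancel, Finset.sum_div, Finset.sum_div]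
        refine Finset.sum_congr rfl fun k _ => ?_
        field_simp
    _ = x * (p ^ m + q * pqNum p q m * x) / pqNum p q (m + 1) := by
        rw [sum_sq_pqNum_mul_pqWeight hq.le hqp]
        field_simp
    _ = x ^ 2 + p ^ m * x * (1 - x) / pqNum p q (m + 1) := by
        field_simp
        rw [pqNum_succ hqp.ne']
        ring

theorem pqBernstein_e2 (p q : ℝ) (hq : 0 < q) (hqp : q < p) (hp : p ≤ 1)
    (n : ℕ) (hn : 1 ≤ n) (x : ℝ) (hx : x ∈ Set.Icc (0 : ℝ) 1) :
    pqBernstein p q n (fun t => t ^ 2) x =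
      x ^ 2 + p ^ (n - 1) * x * (1 - x) / pqNum p q n :=
  pqBernstein_e2_general p q hq hqp n hn x
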